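/- Restrained revision satisfies (Disj1) and (Disj2). In model-theoretic form: for every total preorder ≤ on V and all nonempty A, B, C ⊆ V, (Disj1) min(B, ≤ ∗ᴿ (A ∪ C)) ⊆ min(B, ≤ ∗ᴿ A) ∪ min(B, ≤ ∗ᴿ C), and (Disj2) min(B, ≤ ∗ᴿ A) ⊆ min(B, ≤ ∗ᴿ (A ∪ C)) or min(B, ≤ ∗ᴿ C) ⊆ min(B, ≤ ∗ᴿ (A ∪ C)). (These are exactly the model-set translations of B(E ∗ α ∗ β) ∩ B(E ∗ γ ∗ β) ⊆ B(E ∗ (α ∨ γ) ∗ β) and B(E ∗ (α ∨ γ) ∗ β) ⊆ B(E ∗ α ∗ β) ∪ B(E ∗ γ ∗ β), since for deductively closed knowledge bases X, Y, Z with model sets M_X, M_Y, M_Z one has X ∩ Y ⊆ Z iff M_Z ⊆ M_X ∪ M_Y, and Z ⊆ X ∪ Y iff M_X ⊆ M_Z or M_Y ⊆ M_Z.) -/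
import Mathlib

open Set

variable {V : Type*}

/-- A total preorder: reflexive, transitive and total. -/
def IsTP (r : V → V → Prop) : Prop :=
  Reflexive r ∧ Transitive r ∧ ∀ v w, r v w ∨ r w v

/-- The strict part of a relation: v < w iff v ≤ w and not w ≤ v. -/
def SRel (r : V → V → Prop) (v w : V) : Prop := r v w ∧ ¬ r w v

/-- min(A, ≤) = the ≤-minimal elements of A. -/
def mins (r : V → V → Prop) (A : Set V) : Set V :=
  {v | v ∈ A ∧ ∀ w ∈ A, r v w}

/-- A and B counteract with respect to r. -/
def Counter (r : V → V → Prop) (A B : Set V) : Prop :=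
  mins r A ∩ B = ∅ ∧ mins r B ∩ A = ∅

/-- The restrained revision operator. -/
def restrained (r : V → V → Prop) (A : Set V) : V → V → Prop :=
  fun v w => v ∈ mins r A ∨
    (w ∉ mins r A ∧ (SRel r v w ∨ (r v w ∧ (v ∈ A ∨ w ∉ A))))

section Aux

variable {r : V → V → Prop}

/-- Equivalent elements: if `x` is minimal in `X`, `y ∈ X` and `r y x`, then `y` is minimal. -/
lemma mins_of_le (h : IsTP r) {X : Set V} {x y : V} (hx : x ∈ mins r X) (hyX : y ∈ X)
    (hyx : r y x) : y ∈ mins r X :=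
  ⟨hyX, fun w hw => h.2.1 hyx (hx.2 w hw)⟩

lemma mins_nonempty [Fintype V] (h : IsTP r) {X : Set V} (hX : X.Nonempty) :
    (mins r X).Nonempty := by
  classical
  obtain ⟨hrr, hrt, hrtot⟩ := h
  have key : ∀ s : Finset V, s.Nonempty → ∃ v ∈ s, ∀ w ∈ s, r v w := by
    intro s hs
    induction s using Finset.induction_on with
    | empty => exact absurd hs (by simp)
    | @insert a s ha ih =>
      rcases s.eq_empty_or_nonempty with rfl | hs'
      · exact ⟨a, by simp, by simpa using hrr a⟩
      · obtain ⟨v, hv, hvmin⟩ := ih hs'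
        rcases hrtot v a with hva | hav
        · exact ⟨v, Finset.mem_insert_of_mem hv, by
            intro w hw
            rcases Finset.mem_insert.1 hw with rfl | hw
            · exact hva
            · exact hvmin w hw⟩
        · exact ⟨a, Finset.mem_insert_self a s, by
            intro w hw
            rcases Finset.mem_insert.1 hw with rfl | hw
            · exact hrr _
            · exact hrt hav (hvmin w hw)⟩
  obtain ⟨v, hv, hvmin⟩ := key X.toFinite.toFinset ((Set.Finite.toFinset_nonempty _).2 hX)
  exact ⟨v, (Set.Finite.mem_toFinset _).1 hv, fun w hw =>
    hvmin w ((Set.Finite.mem_toFinset _).2 hw)⟩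

/-- Characterization 1: if `B` meets `min(A)`, then `min(B, r *ᴿ A) = B ∩ min(A)`. -/
lemma restr_mins_eq1 (h : IsTP r) {A B : Set V} (h1 : (B ∩ mins r A).Nonempty) :
    mins (restrained r A) B = B ∩ mins r A := by
  obtain ⟨x, hxB, hxm⟩ := h1
  ext v
  constructor
  · intro ⟨hvB, hvmin⟩
    refine ⟨hvB, ?_⟩
    rcases hvmin x hxB with hv | ⟨hx, _⟩
    · exact hv
    · exact absurd hxm hx
  · intro ⟨hvB, hvm⟩
    exact ⟨hvB, fun w _ => Or.inl hvm⟩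

/-- Characterization 2. -/
lemma restr_mins_eq2 (h : IsTP r) {A B : Set V} (h1 : B ∩ mins r A = ∅)
    (h2 : (mins r B ∩ A).Nonempty) :
    mins (restrained r A) B = mins r B ∩ A := by
  obtain ⟨x, hxM, hxA⟩ := h2
  have hnot : ∀ v ∈ B, v ∉ mins r A := fun v hv hvm =>
    (Set.eq_empty_iff_forall_notMem.1 h1 v) ⟨hv, hvm⟩
  ext v
  constructor
  · intro ⟨hvB, hvmin⟩
    rcases hvmin x hxM.1 with hv | ⟨_, hcases⟩
    · exact absurd hv (hnot v hvB)
    · have hvx : r v x := by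
        rcases hcases with ⟨h', _⟩ | ⟨h', _⟩ <;> exact h'
      have hvM : v ∈ mins r B := mins_of_le h hxM hvB hvx
      have hvA : v ∈ A := by
        rcases hcases with ⟨_, hnxv⟩ | ⟨_, hor⟩
        · exact absurd (hxM.2 v hvB) hnxv
        · rcases hor with hvA | hxnA
          · exact hvA
          · exact absurd hxA hxnA
      exact ⟨hvM, hvA⟩
  · intro ⟨hvM, hvA⟩
    refine ⟨hvM.1, fun w hw => ?_⟩
    refine Or.inr ⟨hnot w hw, ?_⟩
    by_cases hwv : r w v
    · exact Or.inr ⟨hvM.2 w hw, Or.inl hvA⟩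
    · exact Or.inl ⟨hvM.2 w hw, hwv⟩

/-- Characterization 3. -/
lemma restr_mins_eq3 [Fintype V] (h : IsTP r) {A B : Set V} (hB : B.Nonempty)
    (h1 : B ∩ mins r A = ∅) (h2 : mins r B ∩ A = ∅) :
    mins (restrained r A) B = mins r B := by
  obtain ⟨x, hxM⟩ := mins_nonempty h hB
  have hnot : ∀ v ∈ B, v ∉ mins r A := fun v hv hvm =>
    (Set.eq_empty_iff_forall_notMem.1 h1 v) ⟨hv, hvm⟩
  have hnotA : ∀ v ∈ mins r B, v ∉ A := fun v hv hvA =>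
    (Set.eq_empty_iff_forall_notMem.1 h2 v) ⟨hv, hvA⟩
  ext v
  constructor
  · intro ⟨hvB, hvmin⟩
    rcases hvmin x hxM.1 with hv | ⟨_, hcases⟩
    · exact absurd hv (hnot v hvB)
    · have hvx : r v x := by
        rcases hcases with ⟨h', _⟩ | ⟨h', _⟩ <;> exact h'
      exact mins_of_le h hxM hvB hvx
  · intro hvM
    refine ⟨hvM.1, fun w hw => ?_⟩
    refine Or.inr ⟨hnot w hw, ?_⟩
    by_cases hwv : r w v
    · have hwM : w ∈ mins r B := mins_of_le h hvM hw hwv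
      exact Or.inr ⟨hvM.2 w hw, Or.inr (hnotA w hwM)⟩
    · exact Or.inl ⟨hvM.2 w hw, hwv⟩

end Aux

theorem stmt_18 [Fintype V] [Nonempty V] (r : V → V → Prop) (h : IsTP r)
    (A B C : Set V) (hA : A.Nonempty) (hB : B.Nonempty) (hC : C.Nonempty) :
    (mins (restrained r (A ∪ C)) B ⊆
      mins (restrained r A) B ∪ mins (restrained r C) B) ∧
    (mins (restrained r A) B ⊆ mins (restrained r (A ∪ C)) B ∨
      mins (restrained r C) B ⊆ mins (restrained r (A ∪ C)) B) := by
  obtain ⟨hrr, hrt, hrtot⟩ := id h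
  -- restriction: minimal in A ∪ C and in A implies minimal in A
  have hrestrA : ∀ x, x ∈ mins r (A ∪ C) → x ∈ A → x ∈ mins r A :=
    fun x hx hxA => ⟨hxA, fun w hw => hx.2 w (Or.inl hw)⟩
  have hrestrC : ∀ x, x ∈ mins r (A ∪ C) → x ∈ C → x ∈ mins r C :=
    fun x hx hxC => ⟨hxC, fun w hw => hx.2 w (Or.inr hw)⟩
  by_cases h1 : (B ∩ mins r (A ∪ C)).Nonempty
  · -- Case 1 : B meets min(A ∪ C)
    rw [restr_mins_eq1 h h1]
    obtain ⟨x, hxB, hxm⟩ := h1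
    constructor
    · intro y ⟨hyB, hym⟩
      rcases hym.1 with hyA | hyC
      · left
        have hymA : y ∈ mins r A := hrestrA y hym hyA
        rw [restr_mins_eq1 h ⟨y, hyB, hymA⟩]
        exact ⟨hyB, hymA⟩
      · right
        have hymC : y ∈ mins r C := hrestrC y hym hyC
        rw [restr_mins_eq1 h ⟨y, hyB, hymC⟩]
        exact ⟨hyB, hymC⟩
    · rcases hxm.1 with hxA | hxC
      · left
        have hxmA : x ∈ mins r A := hrestrA x hxm hxA
        rw [restr_mins_eq1 h ⟨x, hxB, hxmA⟩]
        intro y ⟨hyB, hym⟩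
        exact ⟨hyB, mins_of_le h hxm (Or.inl hym.1) (hym.2 x hxA)⟩
      · right
        have hxmC : x ∈ mins r C := hrestrC x hxm hxC
        rw [restr_mins_eq1 h ⟨x, hxB, hxmC⟩]
        intro y ⟨hyB, hym⟩
        exact ⟨hyB, mins_of_le h hxm (Or.inr hym.1) (hym.2 x hxC)⟩
  · -- Case 2 : B ∩ min(A ∪ C) = ∅
    have h1' : B ∩ mins r (A ∪ C) = ∅ := Set.not_nonempty_iff_eq_empty.1 h1
    -- at most one of B ∩ min A, B ∩ min C is nonempty
    have honeside : B ∩ mins r A = ∅ ∨ B ∩ mins r C = ∅ := by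
      by_contra hcon
      push_neg at hcon
      obtain ⟨hne1, hne2⟩ := hcon
      obtain ⟨y, hyB, hym⟩ := hne1
      obtain ⟨z, hzB, hzm⟩ := hne2
      rcases hrtot y z with hyz | hzy
      · have : y ∈ mins r (A ∪ C) := ⟨Or.inl hym.1, fun w hw => by
          rcases hw with hw | hw
          · exact hym.2 w hw
          · exact hrt hyz (hzm.2 w hw)⟩
        exact (Set.eq_empty_iff_forall_notMem.1 h1' y) ⟨hyB, this⟩
      · have : z ∈ mins r (A ∪ C) := ⟨Or.inr hzm.1, fun w hw => by
          rcases hw with hw | hw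
          · exact hrt hzy (hym.2 w hw)
          · exact hzm.2 w hw⟩
        exact (Set.eq_empty_iff_forall_notMem.1 h1' z) ⟨hzB, this⟩
    by_cases h2 : (mins r B ∩ (A ∪ C)).Nonempty
    · -- Case 2a : min B meets A ∪ C
      rw [restr_mins_eq2 h h1' h2]
      obtain ⟨x, hxM, hxAC⟩ := h2
      -- helper: compute mins (restrained r A) B when (mins r B ∩ A).Nonempty
      have hcompA : ∀ x', x' ∈ mins r B → x' ∈ A → mins (restrained r A) B = mins r B ∩ A := by
        intro x' hx'M hx'A
        by_cases hBA : (B ∩ mins r A).Nonempty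
        · rw [restr_mins_eq1 h hBA]
          obtain ⟨y, hyB, hym⟩ := hBA
          ext v
          constructor
          · intro ⟨hvB, hvm⟩
            have hvM : v ∈ mins r B := mins_of_le h hx'M hvB (hvm.2 x' hx'A)
            exact ⟨hvM, hvm.1⟩
          · intro ⟨hvM, hvA⟩
            exact ⟨hvM.1, mins_of_le h hym hvA (hvM.2 y hyB)⟩
        · exact restr_mins_eq2 h (Set.not_nonempty_iff_eq_empty.1 hBA) ⟨x', hx'M, hx'A⟩
      have hcompC : ∀ x', x' ∈ mins r B → x' ∈ C → mins (restrained r C) B = mins r B ∩ C := by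
        intro x' hx'M hx'C
        by_cases hBC : (B ∩ mins r C).Nonempty
        · rw [restr_mins_eq1 h hBC]
          obtain ⟨y, hyB, hym⟩ := hBC
          ext v
          constructor
          · intro ⟨hvB, hvm⟩
            have hvM : v ∈ mins r B := mins_of_le h hx'M hvB (hvm.2 x' hx'C)
            exact ⟨hvM, hvm.1⟩
          · intro ⟨hvM, hvC⟩
            exact ⟨hvM.1, mins_of_le h hym hvC (hvM.2 y hyB)⟩
        · exact restr_mins_eq2 h (Set.not_nonempty_iff_eq_empty.1 hBC) ⟨x', hx'M, hx'C⟩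
      constructor
      · intro y ⟨hyM, hyAC⟩
        rcases hyAC with hyA | hyC
        · left; rw [hcompA y hyM hyA]; exact ⟨hyM, hyA⟩
        · right; rw [hcompC y hyM hyC]; exact ⟨hyM, hyC⟩
      · rcases hxAC with hxA | hxC
        · left; rw [hcompA x hxM hxA]
          exact fun v ⟨hvM, hvA⟩ => ⟨hvM, Or.inl hvA⟩
        · right; rw [hcompC x hxM hxC]
          exact fun v ⟨hvM, hvC⟩ => ⟨hvM, Or.inr hvC⟩
    · -- Case 2b : min B misses A ∪ C
      have h2' : mins r B ∩ (A ∪ C) = ∅ := Set.not_nonempty_iff_eq_empty.1 h2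
      have hMA : mins r B ∩ A = ∅ := by
        apply Set.eq_empty_iff_forall_notMem.2
        intro v ⟨hvM, hvA⟩
        exact (Set.eq_empty_iff_forall_notMem.1 h2' v) ⟨hvM, Or.inl hvA⟩
      have hMC : mins r B ∩ C = ∅ := by
        apply Set.eq_empty_iff_forall_notMem.2
        intro v ⟨hvM, hvC⟩
        exact (Set.eq_empty_iff_forall_notMem.1 h2' v) ⟨hvM, Or.inr hvC⟩
      rw [restr_mins_eq3 h hB h1' h2']
      rcases honeside with hBA | hBC
      · have hFA : mins (restrained r A) B = mins r B := restr_mins_eq3 h hB hBA hMA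
        exact ⟨fun v hv => Or.inl (hFA ▸ hv), Or.inl (by rw [hFA])⟩
      · have hFC : mins (restrained r C) B = mins r B := restr_mins_eq3 h hB hBC hMC
        exact ⟨fun v hv => Or.inr (hFC ▸ hv), Or.inr (by rw [hFC])⟩
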